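/- arXiv:2502.10598 — 6 statements merged into one kernel-verified Lean document; each statement's English description precedes it below -/
import Mathlib

section
/- Let ω be a primitive p-th root of unity in ℂ for an odd prime p = 2r+1 with r ≥ 3. Then ((ω+ω⁻¹)(ω²+ω⁻²)⋯(ω^(r-1)+ω^(1-r)))² = (ω^(r+1)/(ω+1))². -/
/-!
Put `c i = ω ^ i + ω ^ (-i)`. Since `c i = ω ^ (-i) * (1 + (ω ^ 2) ^ i)`, `ω ^ 2` is again a
primitive `p`-th root of unity and `p ∣ 1 + 2 + ⋯ + (p - 1)`, the product of `c i` over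
`1 ≤ i ≤ p - 1` equals `∏ (1 + ω ^ i) = 1`, the value at `-1` of `(X ^ p - 1) / (X - 1)`.
As `c (p - i) = c i`, that product is the square of `∏_{i ≤ r} c i`, whose last factor is
`c r = ω ^ r * (1 + ω)` because `ω ^ (-r) = ω ^ (r + 1)`.
-/

open Finset Polynomial

theorem Finset.prod_Icc_one_eq_prod_range {M : Type*} [CommMonoid M] (f : ℕ → M) (n : ℕ) :
    ∏ i ∈ Icc 1 n, f i = ∏ i ∈ range n, f (i + 1) := by
  rw [range_eq_Ico, prod_Ico_add' f 0 n 1]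
  rfl

theorem Finset.prod_range_two_mul_eq_sq {M : Type*} [CommMonoid M] {f : ℕ → M} {r : ℕ}
    (hf : ∀ i j, i + j = 2 * r + 1 → f i = f j) :
    ∏ i ∈ range (2 * r), f (i + 1) = (∏ i ∈ range r, f (i + 1)) ^ 2 := by
  rw [two_mul, prod_range_add, sq, ← prod_range_reflect (fun i ↦ f (r + i + 1)) r]
  congr 1
  refine prod_congr rfl fun i hi ↦ hf _ _ ?_
  have := mem_range.1 hi
  omega

theorem prod_range_pow_succ_eq_one {M : Type*} [CommMonoid M] {ζ : M} {r : ℕ}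
    (hζ : ζ ^ (2 * r + 1) = 1) : ∏ i ∈ range (2 * r), ζ ^ (i + 1) = 1 := by
  have hsum : ∑ i ∈ range (2 * r), (i + 1) = (2 * r + 1) * r := by
    have gauss := sum_range_id_mul_two (2 * r + 1)
    rw [sum_range_succ', Nat.add_sub_cancel] at gauss
    nlinarith
  rw [prod_pow_eq_pow_sum, hsum, pow_mul, hζ, one_pow]

namespace IsPrimitiveRoot

section Domain

variable {R : Type*} [CommRing R] [IsDomain R] {ζ : R}

theorem prod_range_X_sub_C_pow_succ {n : ℕ} (h : IsPrimitiveRoot ζ (n + 1)) :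
    ∏ i ∈ range n, (X - C (ζ ^ (i + 1))) = ∑ i ∈ range (n + 1), (X : R[X]) ^ i := by
  refine mul_left_cancel₀ (X_sub_C_ne_zero (1 : R)) ?_
  have hroots := X_pow_sub_C_eq_prod h n.succ_pos (one_pow (n + 1))
  simp only [mul_one, prod_range_succ', pow_zero, map_one] at hroots
  rw [map_one, mul_geom_sum, hroots, mul_comm]

theorem prod_range_one_add_pow_succ {r : ℕ} (h : IsPrimitiveRoot ζ (2 * r + 1)) :
    ∏ i ∈ range (2 * r), (1 + ζ ^ (i + 1)) = 1 := by
  have heval := congrArg (eval (-1)) h.prod_range_X_sub_C_pow_succ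
  simp only [eval_prod, eval_sub, eval_X, eval_C, eval_finsetSum, eval_pow] at heval
  rw [neg_one_geom_sum, if_neg (Nat.not_even_two_mul_add_one r)] at heval
  calc ∏ i ∈ range (2 * r), (1 + ζ ^ (i + 1))
      = (-1) ^ #(range (2 * r)) * ∏ i ∈ range (2 * r), (1 + ζ ^ (i + 1)) := by
        rw [card_range, pow_mul, neg_one_sq, one_pow, one_mul]
    _ = ∏ i ∈ range (2 * r), (-1 - ζ ^ (i + 1)) := by
        rw [← prod_neg]
        exact prod_congr rfl fun i _ ↦ by ring
    _ = 1 := heval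

end Domain

theorem prod_range_pow_add_inv {K : Type*} [Field K] {ζ : K} {r : ℕ}
    (h : IsPrimitiveRoot ζ (2 * r + 1)) :
    ∏ i ∈ range (2 * r), (ζ ^ (i + 1) + (ζ ^ (i + 1))⁻¹) = 1 := by
  have hζ0 : ζ ≠ 0 := h.ne_zero (by omega)
  have hsq : IsPrimitiveRoot (ζ ^ 2) (2 * r + 1) :=
    h.pow_of_coprime 2 (Nat.coprime_two_left.2 (odd_two_mul_add_one r))
  have hfactor : ∀ i : ℕ, ζ ^ i + (ζ ^ i)⁻¹ = (ζ ^ i)⁻¹ * (1 + (ζ ^ 2) ^ i) := fun i ↦ by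
    field_simp
    ring
  simp only [hfactor, prod_mul_distrib, prod_inv_distrib, prod_range_pow_succ_eq_one h.pow_eq_one,
    hsq.prod_range_one_add_pow_succ, inv_one, one_mul]

theorem sq_prod_range_pow_add_inv {K : Type*} [Field K] {ζ : K} {r : ℕ}
    (h : IsPrimitiveRoot ζ (2 * r + 1)) :
    (∏ i ∈ range r, (ζ ^ (i + 1) + (ζ ^ (i + 1))⁻¹)) ^ 2 = 1 := by
  rw [← prod_range_two_mul_eq_sq (f := fun i ↦ ζ ^ i + (ζ ^ i)⁻¹), h.prod_range_pow_add_inv]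
  intro i j hij
  have : ζ ^ i * ζ ^ j = 1 := by rw [← pow_add, hij, h.pow_eq_one]
  rw [eq_inv_of_mul_eq_one_right this, inv_inv, add_comm]

end IsPrimitiveRoot

theorem halfspin_char_square_general (p r : ℕ)
    (hr : 3 ≤ r) (hpr : p = 2 * r + 1) (ω : ℂ) (hω : IsPrimitiveRoot ω p) :
    (∏ i ∈ Finset.Icc 1 (r - 1), (ω ^ (i : ℤ) + ω ^ (-(i : ℤ)))) ^ 2
      = (ω ^ (r + 1) / (ω + 1)) ^ 2 := by
  subst hpr
  obtain ⟨s, rfl⟩ : ∃ s, r = s + 1 := ⟨r - 1, by omega⟩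
  have hωp : ω ^ (2 * (s + 1) + 1) = 1 := hω.pow_eq_one
  have hω1 : ω + 1 ≠ 0 := by
    intro h
    rw [eq_neg_of_add_eq_zero_left h, Odd.neg_one_pow (odd_two_mul_add_one _)] at hωp
    norm_num at hωp
  have hlast : (ω ^ (s + 1))⁻¹ = ω ^ (s + 1) * ω :=
    inv_eq_of_mul_eq_one_right (by rw [← pow_succ, ← pow_add, ← hωp]; ring_nf)
  have hsq := hω.sq_prod_range_pow_add_inv
  rw [prod_range_succ, hlast, ← prod_Icc_one_eq_prod_range (fun i ↦ ω ^ i + (ω ^ i)⁻¹)] at hsq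
  simp only [Nat.add_sub_cancel, zpow_neg, zpow_natCast]
  rw [div_pow, eq_div_iff (pow_ne_zero 2 hω1)]
  linear_combination ω ^ (2 * s + 4) * hsq -
    (∏ i ∈ Icc 1 s, (ω ^ i + (ω ^ i)⁻¹)) ^ 2 * (ω + 1) ^ 2 * (1 + ω ^ (2 * s + 3)) * hωp

/-- Let `ω` be a primitive `p`-th root of unity in `ℂ` for an odd prime `p = 2r+1` with
`r ≥ 3`. Then `((ω+ω⁻¹)(ω²+ω⁻²)⋯(ω^(r-1)+ω^(1-r)))² = (ω^(r+1)/(ω+1))²`. -/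
theorem halfspin_char_square (p r : ℕ) (hp : p.Prime) (hodd : Odd p)
    (hr : 3 ≤ r) (hpr : p = 2 * r + 1) (ω : ℂ) (hω : IsPrimitiveRoot ω p) :
    (∏ i ∈ Finset.Icc 1 (r - 1), (ω ^ (i : ℤ) + ω ^ (-(i : ℤ)))) ^ 2
      = (ω ^ (r + 1) / (ω + 1)) ^ 2 :=
  halfspin_char_square_general p r hr hpr ω hω
end

section
/- Let p be a prime and m, n positive integers. In 𝔽_p[t], the coefficient of t^d in (1+t)^(m+n) vanishes for all 1 ≤ d ≤ p^r if and only if p^(r+1) divides m+n. -/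
open Polynomial

lemma expand_one_add_X_pow (p : ℕ) (hp : p.Prime) (q k : ℕ) :
    ((1 + X : Polynomial (ZMod p)) ^ (p ^ q * k)) =
      Polynomial.expand (ZMod p) (p ^ q) ((1 + X) ^ k) := by
  haveI := Fact.mk hp
  rw [map_pow, map_add, map_one, expand_X, pow_mul, add_pow_char_pow, one_pow]

lemma koszul_forward (p : ℕ) (hp : p.Prime) (r : ℕ) :
    ∀ N : ℕ, 0 < N →
      (∀ d : ℕ, 1 ≤ d → d ≤ p ^ r →
        ((1 + X : Polynomial (ZMod p)) ^ N).coeff d = 0) → p ^ (r + 1) ∣ N := by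
  induction r with
  | zero =>
    intro N hN H
    have h1 := H 1 le_rfl (by simp)
    rw [coeff_one_add_X_pow, Nat.choose_one_right] at h1
    rw [pow_one]
    exact (ZMod.natCast_eq_zero_iff _ _).mp h1
  | succ r ih =>
    intro N hN H
    have hdvd : p ^ (r + 1) ∣ N := ih N hN fun d h1 h2 =>
      H d h1 (h2.trans (Nat.pow_le_pow_right hp.pos (Nat.le_succ r)))
    obtain ⟨k, hk⟩ := hdvd
    have hq : 0 < p ^ (r + 1) := Nat.pow_pos hp.pos
    have h1 := H (p ^ (r + 1)) hq le_rfl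
    rw [hk, expand_one_add_X_pow p hp (r + 1) k] at h1
    have : (Polynomial.expand (ZMod p) (p ^ (r + 1)) ((1 + X) ^ k)).coeff (p ^ (r + 1) * 1)
        = ((1 + X : Polynomial (ZMod p)) ^ k).coeff 1 := coeff_expand_mul' hq _ _
    rw [mul_one] at this
    rw [this, coeff_one_add_X_pow, Nat.choose_one_right] at h1
    have hpk : p ∣ k := (ZMod.natCast_eq_zero_iff _ _).mp h1
    obtain ⟨j, hj⟩ := hpk
    exact ⟨j, by rw [hk, hj]; ring⟩

/-- Let `p` be a prime and `m, n` positive integers. In `𝔽_p[t]`, the coefficient of `t^d`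
in `(1+t)^(m+n)` vanishes for all `1 ≤ d ≤ p^r` if and only if `p^(r+1)` divides `m+n`. -/
theorem koszul_binomial_vanishing (p : ℕ) (hp : p.Prime) (r m n : ℕ)
    (hm : 0 < m) (hn : 0 < n) :
    (∀ d : ℕ, 1 ≤ d → d ≤ p ^ r →
        ((1 + X : Polynomial (ZMod p)) ^ (m + n)).coeff d = 0) ↔
      p ^ (r + 1) ∣ m + n := by
  constructor
  · exact koszul_forward p hp r (m + n) (by omega)
  · rintro ⟨k, hk⟩ d hd1 hd2
    rw [hk, expand_one_add_X_pow p hp (r + 1) k, coeff_expand (Nat.pow_pos hp.pos)]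
    rw [if_neg]
    intro hdvd
    have : p ^ (r + 1) ≤ d := Nat.le_of_dvd (by omega) hdvd
    have : p ^ r < p ^ (r + 1) := Nat.pow_lt_pow_right hp.one_lt (Nat.lt_succ_self r)
    omega
end

section
/- For i ≥ 1, k ≥ 1 and any n, the polynomial identity P(n, i, i-k+1, k) = -2k holds, where P(n,i,j,k) := (1/(i+c)_c) ∑_{s=0}^{k-d} (-1)^s C(k,s) C(k,d+s) ((i-d)_s (i-d)_{k-d-s}/(i-d)_c) (n+i+s)_s (n-i-1)_{k-d-s}, with d = i-j, c = (k-d+1)/2, and (a)_b = a(a-1)⋯(a-b+1). -/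
/-- The falling factorial `(a)_b = a(a-1)⋯(a-k+1)`, with `(a)_0 = 1`. -/
noncomputable def ff (a : ℚ) (b : ℕ) : ℚ := ∏ j ∈ Finset.range b, (a - j)

/-- The finite hypergeometric-type sum
`P(n,i,j,k) = (1/(i+c)_c) ∑_{s=0}^{k-d} (-1)^s C(k,s) C(k,d+s)
((i-d)_s (i-d)_{k-d-s}/(i-d)_c) (n+i+s)_s (n-i-1)_{k-d-s}`,
where `d = i-j` and `c = (k-d+1)/2` are supplied as the natural numbers `d`, `c`. -/
noncomputable def P (n i : ℚ) (k d c : ℕ) : ℚ :=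
  (1 / ff (i + c) c) * ∑ s ∈ Finset.range (k - d + 1),
    (-1 : ℚ) ^ s * (k.choose s) * (k.choose (d + s)) *
      (ff (i - d) s * ff (i - d) (k - d - s) / ff (i - d) c) *
      ff (n + i + s) s * ff (n - i - 1) (k - d - s)

/-- For `i ≥ 1`, `k ≥ 1` and any `n`, the identity `P(n, i, i-k+1, k) = -2k` holds
(here `j = i-k+1`, so `d = i-j = k-1` and `c = (k-d+1)/2 = 1`), wherever the
denominators `(i+1)` and `(i-d) = i-k+1` are non-zero. -/
theorem P_eval_j_eq_i_sub_k_add_one (k : ℕ) (hk : 1 ≤ k) (n i : ℚ)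
    (h1 : i + 1 ≠ 0) (h2 : i - ((k : ℚ) - 1) ≠ 0) :
    P n i k (k - 1) 1 = -2 * k := by
  obtain ⟨m, rfl⟩ : ∃ m, k = m + 1 := ⟨k - 1, (Nat.succ_pred_eq_of_pos hk).symm⟩
  have h2' : i - (m : ℚ) ≠ 0 := by intro h; apply h2; push_cast; linarith
  have hd : m + 1 - 1 = m := rfl
  have hkd : m + 1 - m = 1 := by omega
  simp only [P, hd, hkd]
  rw [Finset.sum_range_succ, Finset.sum_range_one]
  have e0 : m + 1 - m - 0 = 1 := by omega
  have e1 : m + 1 - m - 1 = 0 := by omega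
  have c0 : (m + 1).choose m = m + 1 := Nat.choose_succ_self_right m
  have c1 : (m + 1).choose (m + 1) = 1 := Nat.choose_self _
  simp only [Nat.add_zero, Nat.sub_zero, e0, e1, c0, c1, Nat.choose_zero_right, Nat.choose_one_right, ff,
    Finset.prod_range_one, Finset.prod_range_zero]
  push_cast
  field_simp
  ring
end

section
/- With P as defined (the finite hypergeometric-type sum controlling structure constants of 𝔰𝔩(L_{n-1})), the identity P(n, i, i, 3) = 4(3n² - 5i - 5i² + 3) holds as polynomials in n and i. -/
lemma ff_succ (a : ℚ) (b : ℕ) : ff a (b+1) = ff a b * (a - b) :=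
  Finset.prod_range_succ _ _

/-- The identity `P(n, i, i, 3) = 4(3n² - 5i - 5i² + 3)` (here `j = i`, so `d = 0`,
`c = 2`), wherever the denominators `(i+2)_2` and `(i)_2` are non-zero. -/
theorem P_n_i_i_three (n i : ℚ) (h1 : ff (i + 2) 2 ≠ 0) (h2 : ff i 2 ≠ 0) :
    P n i 3 0 2 = 4 * (3 * n ^ 2 - 5 * i - 5 * i ^ 2 + 3) := by
  have f0 : ff i 0 = 1 := rfl
  have f1 : ff i 1 = i := by rw [show (1:ℕ) = 0+1 from rfl, ff_succ, f0]; norm_num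
  have f3 : ff i 3 = ff i 2 * (i - 2) := by rw [show (3:ℕ) = 2+1 from rfl, ff_succ]; norm_num
  have hif2 : ff (i + 2) 2 = (i + 2) * (i + 1) := by
    unfold ff; rw [Finset.prod_range_succ, Finset.prod_range_one]; push_cast; ring
  have d0 : ff i 0 * ff i 3 / ff i 2 = i - 2 := by
    rw [f0, f3, one_mul]; field_simp
  have d1 : ff i 1 * ff i 2 / ff i 2 = i := by
    rw [f1]; field_simp
  have d2 : ff i 2 * ff i 1 / ff i 2 = i := by
    rw [f1]; field_simp
  have d3 : ff i 3 * ff i 0 / ff i 2 = i - 2 := by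
    rw [f0, f3, mul_one]; field_simp
  have hi2 : (i + 2) * (i + 1) ≠ 0 := hif2 ▸ h1
  simp only [P, Finset.sum_range_succ, Finset.sum_range_zero, Nat.cast_zero, sub_zero,
    zero_add, Nat.sub_zero]
  norm_num [Nat.choose]
  rw [d0, d1, d2, d3, hif2, inv_mul_eq_div, div_eq_iff hi2]
  simp only [ff, Finset.prod_range_succ, Finset.prod_range_zero]
  push_cast
  ring
end

section
/- Let p be a prime, r ≥ 3, p = 2r+1, and ω a primitive p-th root of unity in ℂ. Define ch(x) = ∏_{i=1}^{r-1} (x^i + x^{-i}). Then either ch(ω) = ω^r + ω^{r-2} + ⋯ + ω^{-r} or ch(ω) = ω^{r-1} + ω^{r-3} + ⋯ + ω^{-(r-1)}. -/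
/-!
With `c i = ω ^ i + ω ^ (-i)` and `Q = c 1 ⋯ c r` we have `ch(ω) * c r = Q`. Since
`c i * ω ^ i = 1 + (ω ^ 2) ^ i`, evaluating `X ^ p - 1 = ∏ (X - (ω ^ 2) ^ i)` at `-1` gives
`c 0 c 1 ⋯ c (p - 1) = 2`, and as `c (p - i) = c i` the left side is `2 Q ^ 2`; hence `Q = ±1`.
The two candidate values are the SL₂ characters `χ_m(x) = ∑_{j<m} x ^ (m - 1 - 2j)` for
`m = r + 1` and `m = r`, and `χ_m(x) (x - x⁻¹) = x ^ m - x ^ (-m)` together with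
`ω ^ (2r+1) = 1` gives `χ_{r+1}(ω) c r = 1` and `χ_r(ω) c r = -1`.
-/

open Finset Polynomial

theorem IsPrimitiveRoot.prod_one_add_pow_eq_two {R : Type*} [CommRing R] [IsDomain R] {n : ℕ}
    {ζ : R} (hζ : IsPrimitiveRoot ζ n) (hn : Odd n) : ∏ k ∈ range n, (1 + ζ ^ k) = 2 := by
  have h := congrArg (eval (-1)) (X_pow_sub_C_eq_prod hζ hn.pos (one_pow n))
  simp only [eval_sub, eval_pow, eval_X, eval_C, eval_prod, mul_one, hn.neg_one_pow] at h
  have hneg : ∏ k ∈ range n, (-1 - ζ ^ k) = -∏ k ∈ range n, (1 + ζ ^ k) := by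
    simp only [← neg_add', prod_neg, card_range, hn.neg_one_pow, neg_one_mul]
  linear_combination h + hneg

theorem prod_range_two_mul_add_one_eq_mul_sq {M : Type*} [CommMonoid M] (r : ℕ) (f : ℕ → M)
    (hf : ∀ i ∈ Icc 1 (2 * r), f (2 * r + 1 - i) = f i) :
    ∏ i ∈ range (2 * r + 1), f i = f 0 * (∏ i ∈ Icc 1 r, f i) ^ 2 := by
  have hIcc : ∏ i ∈ Icc 1 r, f i = ∏ i ∈ range r, f (i + 1) := by
    rw [range_eq_Ico, prod_Ico_add' f, Ico_add_one_right_eq_Icc]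
  have hupper : ∏ i ∈ range r, f (r + i + 1) = ∏ i ∈ range r, f (i + 1) := by
    rw [← prod_range_reflect (fun i => f (i + 1))]
    refine prod_congr rfl fun i hi => ?_
    have := mem_range.mp hi
    rw [← hf (r + i + 1) (mem_Icc.mpr ⟨by omega, by omega⟩)]
    congr 1
    omega
  rw [prod_range_succ', two_mul, prod_range_add, hupper, hIcc, mul_comm, sq]

section Field

variable {K : Type*} [Field K]

theorem sum_zpow_sub_two_mul_mul_sub_inv {x : K} (hx : x ≠ 0) (m : ℕ) :
    (∑ j ∈ range m, x ^ ((m : ℤ) - 1 - 2 * j)) * (x - x⁻¹) = x ^ m - x⁻¹ ^ m := by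
  rw [← geom_sum₂_mul, geom_sum₂_comm]
  refine congrArg (· * _) (sum_congr rfl fun j hj => ?_)
  have hjm : ((m - 1 - j : ℕ) : ℤ) = m - 1 - j := by have := mem_range.mp hj; omega
  rw [inv_pow, ← zpow_natCast, ← zpow_natCast, ← zpow_neg, ← zpow_add₀ hx, hjm]
  ring_nf

theorem sub_inv_ne_zero {x : K} (hx : x ≠ 0) (hx2 : x ^ 2 ≠ 1) : x - x⁻¹ ≠ 0 := by
  rw [sub_ne_zero]
  intro h
  field_simp at h
  exact hx2 (by linear_combination h)

theorem IsPrimitiveRoot.prod_zpow_add_zpow_neg_eq_two {n : ℕ} {ω : K}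
    (hω : IsPrimitiveRoot ω n) (hn : Odd n) :
    ∏ k ∈ range n, (ω ^ (k : ℤ) + ω ^ (-(k : ℤ))) = 2 := by
  have h0 : ω ≠ 0 := hω.ne_zero hn.pos.ne'
  have hterm (k : ℕ) : ω ^ (k : ℤ) + ω ^ (-(k : ℤ)) = ω⁻¹ ^ k * (1 + (ω ^ 2) ^ k) := by
    rw [zpow_neg, zpow_natCast, inv_pow]
    field_simp
    ring
  have hinv : ∏ k ∈ range n, ω⁻¹ ^ k = 1 := by
    obtain ⟨m, rfl⟩ := hn
    rw [prod_pow_eq_pow_sum, sum_range_id, Nat.add_sub_cancel,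
      Nat.mul_div_assoc _ (dvd_mul_right 2 m), Nat.mul_div_cancel_left m two_pos, pow_mul,
      hω.inv.pow_eq_one, one_pow]
  have hsq : IsPrimitiveRoot (ω ^ 2) n := hω.pow_of_coprime 2 (Nat.coprime_two_left.mpr hn)
  simp only [hterm, prod_mul_distrib, hinv, hsq.prod_one_add_pow_eq_two hn, one_mul]

theorem IsPrimitiveRoot.sq_prod_Icc_zpow_add_zpow_neg {r : ℕ} {ω : K}
    (hω : IsPrimitiveRoot ω (2 * r + 1)) (h2 : (2 : K) ≠ 0) :
    (∏ i ∈ Icc 1 r, (ω ^ (i : ℤ) + ω ^ (-(i : ℤ)))) ^ 2 = 1 := by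
  have h0 : ω ≠ 0 := hω.ne_zero (by omega)
  have hp : ω ^ ((2 * r + 1 : ℕ) : ℤ) = 1 := by rw [zpow_natCast, hω.pow_eq_one]
  set c : ℕ → K := fun i => ω ^ (i : ℤ) + ω ^ (-(i : ℤ))
  have hsymm : ∀ i ∈ Icc 1 (2 * r), c (2 * r + 1 - i) = c i := fun i hi => by
    simp only [c]
    rw [Nat.cast_sub (by grind), neg_sub, zpow_sub₀ h0, zpow_sub₀ h0, hp, one_div, div_one,
      zpow_neg, add_comm]
  have h := prod_range_two_mul_add_one_eq_mul_sq r c hsymm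
  rw [hω.prod_zpow_add_zpow_neg_eq_two ⟨r, rfl⟩] at h
  simp only [c, Nat.cast_zero, neg_zero, zpow_zero] at h
  exact (mul_right_injective₀ h2 (by linear_combination h)).symm

theorem sum_zpow_sub_two_mul_mul_zpow_add_zpow_neg {r : ℕ} {ω : K}
    (hω : ω ^ (2 * r + 1) = 1) (hω2 : ω ^ 2 ≠ 1) :
    (∑ j ∈ range (r + 1), ω ^ ((r : ℤ) - 2 * j)) * (ω ^ (r : ℤ) + ω ^ (-(r : ℤ))) =
      1 := by
  have h0 : ω ≠ 0 := by rintro rfl; simp at hω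
  have hχ := sum_zpow_sub_two_mul_mul_sub_inv h0 (r + 1)
  rw [Nat.cast_succ, add_sub_cancel_right] at hχ
  apply mul_right_cancel₀ (sub_inv_ne_zero h0 hω2)
  rw [mul_right_comm, hχ, zpow_neg, zpow_natCast, inv_pow]
  field_simp
  linear_combination ω * (ω ^ (2 * r + 1) + 1) * hω

theorem sum_zpow_sub_one_sub_two_mul_mul_zpow_add_zpow_neg {r : ℕ} {ω : K}
    (hω : ω ^ (2 * r + 1) = 1) (hω2 : ω ^ 2 ≠ 1) :
    (∑ j ∈ range r, ω ^ ((r : ℤ) - 1 - 2 * j)) * (ω ^ (r : ℤ) + ω ^ (-(r : ℤ))) =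
      -1 := by
  have h0 : ω ≠ 0 := by rintro rfl; simp at hω
  apply mul_right_cancel₀ (sub_inv_ne_zero h0 hω2)
  rw [mul_right_comm, sum_zpow_sub_two_mul_mul_sub_inv h0 r, zpow_neg, zpow_natCast, inv_pow]
  field_simp
  linear_combination (ω ^ (2 * r) + ω) * hω

end Field

theorem halfspin_char_eval_general (p r : ℕ) (hr : 3 ≤ r) (hpr : p = 2 * r + 1)
    (ω : ℂ) (hω : IsPrimitiveRoot ω p) :
    (∏ i ∈ Finset.Icc 1 (r - 1), (ω ^ (i : ℤ) + ω ^ (-(i : ℤ))))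
        = ∑ j ∈ Finset.range (r + 1), ω ^ ((r : ℤ) - 2 * j) ∨
    (∏ i ∈ Finset.Icc 1 (r - 1), (ω ^ (i : ℤ) + ω ^ (-(i : ℤ))))
        = ∑ j ∈ Finset.range r, ω ^ ((r : ℤ) - 1 - 2 * j) := by
  subst hpr
  have hω2 : ω ^ 2 ≠ 1 := hω.pow_ne_one_of_pos_of_lt two_ne_zero (by omega)
  have hS₁ := sum_zpow_sub_two_mul_mul_zpow_add_zpow_neg hω.pow_eq_one hω2
  have hS₂ := sum_zpow_sub_one_sub_two_mul_mul_zpow_add_zpow_neg hω.pow_eq_one hω2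
  have hc : ω ^ (r : ℤ) + ω ^ (-(r : ℤ)) ≠ 0 :=
    right_ne_zero_of_mul (by rw [hS₂]; norm_num)
  have hQ := hω.sq_prod_Icc_zpow_add_zpow_neg two_ne_zero
  obtain ⟨s, rfl⟩ : ∃ s, r = s + 1 := ⟨r - 1, by omega⟩
  rw [prod_Icc_succ_top (by omega), sq_eq_one_iff] at hQ
  rw [Nat.add_sub_cancel]
  rcases hQ with hQ | hQ
  · exact .inl (mul_right_cancel₀ hc (hQ.trans hS₁.symm))
  · exact .inr (mul_right_cancel₀ hc (hQ.trans hS₂.symm))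

/-- Let `p = 2r+1` be prime with `r ≥ 3`, and `ω` a primitive `p`-th root of unity in `ℂ`.
With `ch(x) = ∏_{i=1}^{r-1} (x^i + x^{-i})`, either
`ch(ω) = ω^r + ω^(r-2) + ⋯ + ω^(-r)` or `ch(ω) = ω^(r-1) + ω^(r-3) + ⋯ + ω^(-(r-1))`. -/
theorem halfspin_char_eval (p r : ℕ) (hp : p.Prime) (hr : 3 ≤ r) (hpr : p = 2 * r + 1)
    (ω : ℂ) (hω : IsPrimitiveRoot ω p) :
    (∏ i ∈ Finset.Icc 1 (r - 1), (ω ^ (i : ℤ) + ω ^ (-(i : ℤ))))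
        = ∑ j ∈ Finset.range (r + 1), ω ^ ((r : ℤ) - 2 * j) ∨
    (∏ i ∈ Finset.Icc 1 (r - 1), (ω ^ (i : ℤ) + ω ^ (-(i : ℤ))))
        = ∑ j ∈ Finset.range r, ω ^ ((r : ℤ) - 1 - 2 * j) :=
  halfspin_char_eval_general p r hr hpr ω hω
end

section
/- Let k have characteristic p ≥ 3, and let V_a denote the irreducible SL₂-representation of highest weight a over ℚ, with inclusion ι_k^{a,b} : V_k → V_a ⊗ V_b (for |a-b| ≤ k ≤ a+b, χ := (a+b-k)/2 ∈ ℕ) given on a highest weight vector e_k by ι(e_k) = ∑_{r=0}^{χ} (-1)^r (C(χ,r)/C(χ+k, a-r)) F^r e_a ⊗ F^{χ-r} e_b. Then the braiding (swap) composed with ι_k^{a,b} equals (-1)^χ · ι_k^{b,a}. -/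
open TensorProduct

/-- Model of the Clebsch–Gordan embedding `ι_k^{a,b} : V_k → V_a ⊗ V_b` applied to a
highest weight vector `e_k`.  The vector space `V_a` (irreducible `SL₂`-representation of
highest weight `a` over `ℚ`) has basis `F^r e_a`, `0 ≤ r ≤ a`, where `F` is the standard
lowering operator; we model `F^r e_a` by the basis vector `Pi.single r 1` of `ℕ → ℚ`.
With `χ = (a+b-k)/2`, the image of `e_k` is
`ι(e_k) = ∑_{r=0}^{χ} (-1)^r (C(χ,r)/C(χ+k, a-r)) F^r e_a ⊗ F^{χ-r} e_b`. -/
noncomputable def iotaVec (a k χ : ℕ) : (ℕ → ℚ) ⊗[ℚ] (ℕ → ℚ) :=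
  ∑ r ∈ Finset.range (χ + 1),
    ((-1 : ℚ) ^ r * ((χ.choose r : ℚ) / ((χ + k).choose (a - r) : ℚ))) •
      (Pi.single r (1 : ℚ) ⊗ₜ[ℚ] Pi.single (χ - r) (1 : ℚ))

set_option synthInstance.maxHeartbeats 400000 in
set_option maxHeartbeats 800000 in
/-- For `|a-b| ≤ k ≤ a+b` with `χ := (a+b-k)/2 ∈ ℕ`, the braiding (tensor swap)
`c_{V_a,V_b}` composed with the Clebsch–Gordan inclusion `ι_k^{a,b}` equals
`(-1)^χ · ι_k^{b,a}`: evaluated on the highest weight vector `e_k`, the swap of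
`ι_k^{a,b}(e_k)` is `(-1)^χ ι_k^{b,a}(e_k)`. -/
theorem clebschGordan_swap (a b k χ : ℕ)
    (hχ : a + b = k + 2 * χ) (hab : a ≤ b + k) (hba : b ≤ a + k) :
    (TensorProduct.comm ℚ (ℕ → ℚ) (ℕ → ℚ)) (iotaVec a k χ)
      = ((-1 : ℚ) ^ χ) • iotaVec b k χ := by
  have ha : χ ≤ a := by omega
  have hb : χ ≤ b := by omega
  simp only [iotaVec, map_sum, map_smul, TensorProduct.comm_tmul, Finset.smul_sum]
  rw [← Finset.sum_range_reflect]
  apply Finset.sum_congr rfl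
  intro r hr
  rw [Finset.mem_range, Nat.lt_succ_iff] at hr
  have h1 : χ + 1 - 1 - r = χ - r := by omega
  rw [h1]
  have h2 : χ - (χ - r) = r := by omega
  rw [h2]
  have h3 : a - (χ - r) = (χ + k) - (b - r) := by omega
  have h4 : (χ + k).choose ((χ + k) - (b - r)) = (χ + k).choose (b - r) :=
    Nat.choose_symm (by omega)
  rw [h3, h4, Nat.choose_symm hr]
  have hs : (-1 : ℚ) ^ χ = (-1) ^ (χ - r) * (-1) ^ r := by
    rw [← pow_add]; congr 1; omega
  have hrr : (-1 : ℚ) ^ r * (-1) ^ r = 1 := by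
    rw [← pow_add]; exact Even.neg_one_pow ⟨r, rfl⟩
  rw [hs, smul_smul]
  congr 1
  field_simp
  ring_nf
  simp [pow_mul]
  rw [show ((-1:ℚ)^r)^2 = 1 by rw [sq]; exact hrr, mul_one]
end
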